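/- Let G be a group, n ≥ 1, and N the normal subgroup of G^n ⋊ Sₙ generated by the canonical copy of Sₙ. Then for all g₁,...,gₙ ∈ G and σ ∈ Sₙ, the element (g₁,...,gₙ,σ) is congruent modulo N to (g₁g₂⋯gₙ, 1, ..., 1, σ). -/

import Mathlib

open SemidirectProduct

/-- The permutation action of `Sₙ` on `Gⁿ`: `σ • g = g ∘ σ⁻¹`. -/
def permHom (G : Type*) [Group G] (n : ℕ) :
    Equiv.Perm (Fin n) →* MulAut (Fin n → G) where
  toFun σ := MulEquiv.arrowCongr σ (MulEquiv.refl G)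
  map_one' := by ext f i; rfl
  map_mul' σ τ := by ext f i; rfl

/-- The semidirect product `Gⁿ ⋊ Sₙ` for the permutation action. -/
abbrev SDP (G : Type*) [Group G] (n : ℕ) :=
  (Fin n → G) ⋊[permHom G n] Equiv.Perm (Fin n)

/-- The normal closure of the canonical copy of `Sₙ` inside `Gⁿ ⋊ Sₙ`. -/
def Ncl (G : Type*) [Group G] (n : ℕ) : Subgroup (SDP G n) :=
  Subgroup.normalClosure
    (Set.range (SemidirectProduct.inr (φ := permHom G n)))

instance (G : Type*) [Group G] (n : ℕ) : (Ncl G n).Normal :=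
  Subgroup.normalClosure_normal

/-!
Modulo `N` every permutation is trivial, so `(g, σ) ≡ (g, 1)`, and moreover `(g, 1)` is congruent
to each of its conjugates by permutations. Conjugating by a transposition moves a coordinate
vector `Pi.mulSingle i x` to `Pi.mulSingle j x`; writing `g` as the ordered product of its
coordinate vectors and moving each of them to the first slot collects `g₁ ⋯ gₙ` there.
-/

theorem List.prod_ofFn_mulSingle {M : Type*} [Monoid M] {n : ℕ} (f : Fin n → M) :
    (List.ofFn fun i => Pi.mulSingle i (f i)).prod = f := by
  conv_rhs => rw [← Finset.noncommProd_mulSingle f]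
  simp only [Finset.noncommProd, Fin.univ_val_map, Multiset.noncommProd_coe]

namespace SemidirectProduct

variable {N G : Type*} [Group N] [Group G] {φ : G →* MulAut N}
  {K : Subgroup (N ⋊[φ] G)} [K.Normal]

theorem mk_inr_eq_one (hK : ∀ g, inr g ∈ K) (g : G) :
    ((inr g : N ⋊[φ] G) : (N ⋊[φ] G) ⧸ K) = 1 :=
  (QuotientGroup.eq_one_iff _).2 (hK g)

theorem mk_eq_mk_inl_left (hK : ∀ g, inr g ∈ K) (x : N ⋊[φ] G) :
    (x : (N ⋊[φ] G) ⧸ K) = ((inl x.left : N ⋊[φ] G) : (N ⋊[φ] G) ⧸ K) := by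
  conv_lhs => rw [← inl_left_mul_inr_right x]
  rw [QuotientGroup.mk_mul, mk_inr_eq_one hK, mul_one]

theorem mk_inl_aut (hK : ∀ g, inr g ∈ K) (g : G) (n : N) :
    ((inl (φ g n) : N ⋊[φ] G) : (N ⋊[φ] G) ⧸ K) =
      ((inl n : N ⋊[φ] G) : (N ⋊[φ] G) ⧸ K) := by
  rw [inl_aut, QuotientGroup.mk_mul, QuotientGroup.mk_mul, mk_inr_eq_one hK,
    mk_inr_eq_one hK, one_mul, mul_one]

end SemidirectProduct

section Wreath

variable {G : Type*} [Group G] {n : ℕ}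

theorem permHom_apply (σ : Equiv.Perm (Fin n)) (f : Fin n → G) (i : Fin n) :
    permHom G n σ f i = f (σ.symm i) :=
  rfl

theorem permHom_swap_mulSingle (i j : Fin n) (x : G) :
    permHom G n (Equiv.swap i j) (Pi.mulSingle i x) = Pi.mulSingle j x := by
  ext k
  simp only [permHom_apply, Equiv.symm_swap, Pi.mulSingle_apply, Equiv.swap_apply_eq_iff,
    Equiv.swap_apply_left]

theorem inr_mem_Ncl (σ : Equiv.Perm (Fin n)) : inr σ ∈ Ncl G n :=
  Subgroup.subset_normalClosure ⟨σ, rfl⟩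

theorem mk_inl_mulSingle (i j : Fin n) (x : G) :
    ((inl (Pi.mulSingle i x) : SDP G n) : SDP G n ⧸ Ncl G n) =
      (inl (Pi.mulSingle j x) : SDP G n) := by
  rw [← permHom_swap_mulSingle i j, mk_inl_aut inr_mem_Ncl]

theorem mk_inl_eq_mk_inl_mulSingle_prod (j : Fin n) (g : Fin n → G) :
    ((inl g : SDP G n) : SDP G n ⧸ Ncl G n) =
      (inl (Pi.mulSingle j (List.ofFn g).prod) : SDP G n) := by
  let ψ := (QuotientGroup.mk' (Ncl G n)).comp (inl (φ := permHom G n))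
  calc ψ g = ψ (List.ofFn fun i => Pi.mulSingle i (g i)).prod := by
        rw [List.prod_ofFn_mulSingle]
    _ = ψ (List.ofFn fun i => Pi.mulSingle j (g i)).prod := by
        simp only [map_list_prod, List.map_ofFn]
        congr 1
        exact List.ofFn_inj.2 (funext fun i => mk_inl_mulSingle i j (g i))
    _ = ψ (Pi.mulSingle j (List.ofFn g).prod) := by
        rw [← MonoidHom.mulSingle_apply, map_list_prod (MonoidHom.mulSingle (fun _ => G) j),
          List.map_ofFn]
        rfl

end Wreath

theorem collect_product_mod_N (G : Type*) [Group G] (n : ℕ) (hn : 1 ≤ n)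
    (g : Fin n → G) (σ : Equiv.Perm (Fin n)) :
    ((⟨g, σ⟩ : SDP G n) : SDP G n ⧸ Ncl G n) =
      ((⟨fun i => if i = (⟨0, hn⟩ : Fin n) then (List.ofFn g).prod else 1, σ⟩ :
          SDP G n) : SDP G n ⧸ Ncl G n) := by
  simp only [← Pi.mulSingle_apply]
  rw [mk_eq_mk_inl_left inr_mem_Ncl ⟨g, σ⟩, mk_eq_mk_inl_left inr_mem_Ncl ⟨_, σ⟩]
  exact mk_inl_eq_mk_inl_mulSingle_prod _ g
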